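/- Let N ≥ 2 be an integer and let m₀, m₀' : ℝ → ℂ be essentially bounded measurable 2π-periodic functions. Suppose φ, φ' ∈ L²(ℝ) satisfy the scaling equations φ̂(ω) = N^{-1/2} m₀(ω/N) φ̂(ω/N) and φ̂'(ω) = N^{-1/2} m₀'(ω/N) φ̂'(ω/N) for a.e. ω ∈ ℝ. Then h₀ := Per(conj(φ̂) φ̂') ∈ L¹(0,2π) satisfies R_{m₀,m₀'} h₀ = h₀, i.e. (1/N) Σ_{l=0}^{N-1} conj(m₀((ω+2lπ)/N)) m₀'((ω+2lπ)/N) h₀((ω+2lπ)/N) = h₀(ω) for a.e. ω. -/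

import Mathlib

/- STATEMENT 9: if φ, φ' ∈ L²(ℝ) satisfy the Fourier-domain scaling equations
`φ̂(ω) = N^{-1/2} m₀(ω/N) φ̂(ω/N)` and `φ̂'(ω) = N^{-1/2} m₀'(ω/N) φ̂'(ω/N)` (a.e.),
then `h₀ := Per(conj(φ̂) φ̂') ∈ L¹(0,2π)` satisfies `R_{m₀,m₀'} h₀ = h₀` a.e.
Since the statement depends on φ, φ' only through their Fourier–Plancherel transforms,
we quantify over the transforms `G = φ̂`, `G' = φ̂'` (functions in L²(ℝ)) directly. -/

noncomputable section

open MeasureTheory Complex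
open scoped ComplexConjugate

/-- The Ruelle transfer operator `R_{m₀,m₀'}` at scale `N` for 2π-periodic functions. -/
def ruelle (N : ℕ) (m₀ m₀' : ℝ → ℂ) (f : ℝ → ℂ) : ℝ → ℂ := fun ω =>
  (N : ℂ)⁻¹ * ∑ l ∈ Finset.range N,
    conj (m₀ ((ω + 2 * Real.pi * l) / N)) * m₀' ((ω + 2 * Real.pi * l) / N) *
      f ((ω + 2 * Real.pi * l) / N)

/- The product `F = conj φ̂ · φ̂'` of two L² functions is integrable, so its 2π-periodization
converges absolutely a.e. and is integrable over a period: unfolding `∫_ℝ |F|` along the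
translates of `(0, 2π]` gives `∫_(0,2π] Σ_k |F(ω + 2πk)| = ‖F‖₁`. The two scaling equations
combine into `F(ω) = N⁻¹ conj m₀(ω/N) m₀'(ω/N) F(ω/N)`. Splitting `k ∈ ℤ` in `Per F(ω)` by its
residue `l` modulo `N` and absorbing the quotient into the 2π-periodicity of `m₀, m₀'` turns the
periodization into the Ruelle sum `Σ_l N⁻¹ conj m₀ m₀' Per F` at the points `(ω + 2πl)/N`. -/

open Set Finset Function
open scoped ENNReal

theorem tsum_int_eq_sum_range_tsum_mul_add {E : Type*} [NormedAddCommGroup E] [CompleteSpace E]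
    (N : ℕ) [NeZero N] {f : ℤ → E} (hf : Summable f) :
    ∑' m, f m = ∑ l ∈ range N, ∑' k : ℤ, f (k * N + l) := by
  let e : Fin N × ℤ ≃ ℤ := (Equiv.prodComm _ _).trans (Int.divModEquiv N).symm
  have he : Summable (f ∘ e) := e.summable_iff.2 hf
  calc ∑' m, f m = ∑' p : Fin N × ℤ, f (e p) := (e.tsum_eq f).symm
    _ = ∑ l : Fin N, ∑' k : ℤ, f (k * N + l) := by
      change ∑' p, (f ∘ e) p = _
      rw [he.tsum_prod' he.prod_factor, tsum_fintype]
      rfl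
    _ = ∑ l ∈ range N, ∑' k : ℤ, f (k * N + l) :=
      Fin.sum_univ_eq_sum_range (fun l : ℕ => ∑' k : ℤ, f (k * N + l)) N

theorem setLIntegral_Ioc_comp_add_right (f : ℝ → ℝ≥0∞) (a b c : ℝ) :
    ∫⁻ x in Ioc a b, f (x + c) = ∫⁻ x in Ioc (a + c) (b + c), f x := by
  rw [(measurePreserving_add_right volume c).setLIntegral_comp_emb
    (measurableEmbedding_addRight c), image_add_const_Ioc]

theorem AEMeasurable.comp_add_const {G β : Type*} [AddGroup G] [MeasurableSpace G]
    [MeasurableAdd G] [MeasurableSpace β] {μ : Measure G} [μ.IsAddRightInvariant] {f : G → β}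
    (hf : AEMeasurable f μ) (c : G) : AEMeasurable (fun x => f (x + c)) μ :=
  hf.comp_quasiMeasurePreserving (measurePreserving_add_right μ c).quasiMeasurePreserving

theorem lintegral_Ioc_tsum_comp_add_mul {T : ℝ} (hT : 0 < T) (a : ℝ) {f : ℝ → ℝ≥0∞}
    (hf : AEMeasurable f) :
    ∫⁻ x in Ioc a (a + T), ∑' k : ℤ, f (x + T * k) = ∫⁻ x, f x := by
  calc ∫⁻ x in Ioc a (a + T), ∑' k : ℤ, f (x + T * k)
      = ∑' k : ℤ, ∫⁻ x in Ioc a (a + T), f (x + T * k) :=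
        lintegral_tsum fun k => (hf.comp_add_const _).restrict
    _ = ∑' k : ℤ, ∫⁻ x in Ioc (a + k • T) (a + (k + 1) • T), f x := by
        refine tsum_congr fun k => ?_
        rw [setLIntegral_Ioc_comp_add_right, add_one_zsmul, zsmul_eq_mul]
        congr 3 <;> ring
    _ = ∫⁻ x, f x := by
        rw [← lintegral_iUnion (fun _ => measurableSet_Ioc) (pairwise_disjoint_Ioc_add_zsmul a T),
          iUnion_Ioc_add_zsmul hT, Measure.restrict_univ]

def periodization {E : Type*} [AddCommMonoid E] [TopologicalSpace E] (T : ℝ) (F : ℝ → E)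
    (x : ℝ) : E :=
  ∑' k : ℤ, F (x + T * k)

section Periodization

variable {E : Type*} [NormedAddCommGroup E] {T : ℝ} {F : ℝ → E}

theorem MeasureTheory.Integrable.ae_summable_norm_comp_add_mul (hT : 0 < T) (hF : Integrable F) :
    ∀ᵐ x, Summable fun k : ℤ => ‖F (x + T * k)‖ := by
  have hperiod (n : ℤ) : ∀ᵐ x ∂volume.restrict (Ioc (0 + n • T) (0 + (n + 1) • T)),
      Summable fun k : ℤ => ‖F (x + T * k)‖ := by
    rw [add_one_zsmul, ← add_assoc]
    have hfin := lintegral_Ioc_tsum_comp_add_mul hT (0 + n • T) hF.1.enorm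
    have hmeas : AEMeasurable (fun x => ∑' k : ℤ, ‖F (x + T * k)‖ₑ)
        (volume.restrict (Ioc (0 + n • T) (0 + n • T + T))) :=
      AEMeasurable.tsum fun k => (hF.1.enorm.comp_add_const _).restrict
    filter_upwards [ae_lt_top' hmeas (hfin ▸ hF.2.ne)]
      with x hx using tsum_enorm_ne_top_iff_summable_norm.1 hx.ne
  rw [← Measure.restrict_univ (μ := volume), ← iUnion_Ioc_add_zsmul hT 0, ae_restrict_iUnion_iff]
  exact hperiod

theorem MeasureTheory.Integrable.integrableOn_Ioc_periodization [CompleteSpace E]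
    [SecondCountableTopology E] [MeasurableSpace E] [BorelSpace E] (hT : 0 < T)
    (hF : Integrable F) (a : ℝ) :
    IntegrableOn (periodization T F) (Ioc a (a + T)) := by
  refine ⟨(AEMeasurable.tsum (f := fun (k : ℤ) x => F (x + T * k))
    fun k => hF.aemeasurable.comp_add_const _).aestronglyMeasurable.restrict, ?_⟩
  calc ∫⁻ x in Ioc a (a + T), ‖periodization T F x‖ₑ
      ≤ ∫⁻ x in Ioc a (a + T), ∑' k : ℤ, ‖F (x + T * k)‖ₑ :=
        lintegral_mono fun x => enorm_tsum_le_tsum_enorm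
    _ = ∫⁻ x, ‖F x‖ₑ := lintegral_Ioc_tsum_comp_add_mul hT a hF.1.enorm
    _ < ∞ := hF.2

end Periodization

theorem periodization_eq_sum_range_smul {𝕜 E : Type*} [NormedField 𝕜] [NormedAddCommGroup E]
    [CompleteSpace E] [NormedSpace 𝕜 E] {T : ℝ} {N : ℕ} [NeZero N] {c : ℝ → 𝕜}
    (hc : Periodic c T) {F : ℝ → E} {ω : ℝ} (hsum : Summable fun k : ℤ => F (ω + T * k))
    (hscal : ∀ m : ℤ, F (ω + T * m) = c ((ω + T * m) / N) • F ((ω + T * m) / N)) :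
    periodization T F ω =
      ∑ l ∈ range N, c ((ω + T * l) / N) • periodization T F ((ω + T * l) / N) := by
  rw [periodization, tsum_int_eq_sum_range_tsum_mul_add N hsum]
  refine sum_congr rfl fun l _ => ?_
  rw [periodization, ← tsum_const_smul'']
  refine tsum_congr fun k => ?_
  have harg : (ω + T * ((k * N + l : ℤ) : ℝ)) / N = (ω + T * l) / N + k * T := by
    have : (N : ℝ) ≠ 0 := Nat.cast_ne_zero.2 (NeZero.ne N)
    field_simp
    push_cast
    ring
  rw [hscal, harg, hc.int_mul k, mul_comm (k : ℝ) T]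

theorem stmt_9_general (N : ℕ) (hN : 2 ≤ N) (m₀ m₀' : ℝ → ℂ)
    -- m₀, m₀' essentially bounded, measurable, 2π-periodic
    (hm₀p : ∀ x, m₀ (x + 2 * Real.pi) = m₀ x)
    (hm₀'p : ∀ x, m₀' (x + 2 * Real.pi) = m₀' x)
    -- G = φ̂, G' = φ̂' ∈ L²(ℝ)
    (G G' : ℝ → ℂ)
    (hG : MemLp G 2 (volume : Measure ℝ)) (hG' : MemLp G' 2 (volume : Measure ℝ))
    -- the scaling equations
    (hscal : ∀ᵐ ω ∂(volume : Measure ℝ),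
      G ω = ((Real.sqrt N : ℝ) : ℂ)⁻¹ * m₀ (ω / N) * G (ω / N))
    (hscal' : ∀ᵐ ω ∂(volume : Measure ℝ),
      G' ω = ((Real.sqrt N : ℝ) : ℂ)⁻¹ * m₀' (ω / N) * G' (ω / N)) :
    -- h₀ = Per(conj(φ̂) φ̂') is in L¹(0,2π) and is a fixed point of R_{m₀,m₀'}
    IntegrableOn
      (fun ω => ∑' k : ℤ, conj (G (ω + 2 * Real.pi * k)) * G' (ω + 2 * Real.pi * k))
      (Set.Ioc 0 (2 * Real.pi)) volume ∧
    ∀ᵐ ω ∂(volume : Measure ℝ),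
      ruelle N m₀ m₀'
        (fun x => ∑' k : ℤ, conj (G (x + 2 * Real.pi * k)) * G' (x + 2 * Real.pi * k)) ω
      = ∑' k : ℤ, conj (G (ω + 2 * Real.pi * k)) * G' (ω + 2 * Real.pi * k) := by
  have : NeZero N := ⟨by omega⟩
  set F : ℝ → ℂ := fun x => conj (G x) * G' x
  set c : ℝ → ℂ := fun x => (N : ℂ)⁻¹ * (conj (m₀ x) * m₀' x)
  have hc : Periodic c (2 * Real.pi) := fun x => by simp only [c, hm₀p, hm₀'p]
  have hFi : Integrable F := hG.star.integrable_mul hG'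
  have hFscal : ∀ᵐ x, F x = c (x / N) • F (x / N) := by
    have hsqrt : ((√N : ℝ) : ℂ)⁻¹ * ((√N : ℝ) : ℂ)⁻¹ = (N : ℂ)⁻¹ := by
      rw [← mul_inv, ← ofReal_mul, Real.mul_self_sqrt N.cast_nonneg, ofReal_natCast]
    filter_upwards [hscal, hscal'] with x hx hx'
    simp only [F, c, hx, hx', map_mul, map_inv₀, conj_ofReal, smul_eq_mul]
    linear_combination conj (m₀ (x / N)) * m₀' (x / N) * conj (G (x / N)) * G' (x / N) * hsqrt
  have hFscal_shift : ∀ᵐ ω, ∀ m : ℤ, F (ω + 2 * Real.pi * m) =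
      c ((ω + 2 * Real.pi * m) / N) • F ((ω + 2 * Real.pi * m) / N) :=
    ae_all_iff.2 fun m => (measurePreserving_add_right volume _).quasiMeasurePreserving.ae hFscal
  change IntegrableOn (periodization (2 * Real.pi) F) _ _ ∧
    ∀ᵐ ω, ruelle N m₀ m₀' (periodization (2 * Real.pi) F) ω = periodization (2 * Real.pi) F ω
  refine ⟨by simpa only [zero_add] using hFi.integrableOn_Ioc_periodization Real.two_pi_pos 0, ?_⟩
  filter_upwards [hFi.ae_summable_norm_comp_add_mul Real.two_pi_pos, hFscal_shift]
    with ω hsum hω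
  rw [periodization_eq_sum_range_smul hc hsum.of_norm hω, ruelle, Finset.mul_sum]
  refine sum_congr rfl fun l _ => ?_
  simp only [c, smul_eq_mul]
  ring

theorem stmt_9 (N : ℕ) (hN : 2 ≤ N) (m₀ m₀' : ℝ → ℂ)
    -- m₀, m₀' essentially bounded, measurable, 2π-periodic
    (hm₀m : Measurable m₀) (hm₀b : ∃ C, ∀ x, ‖m₀ x‖ ≤ C)
    (hm₀p : ∀ x, m₀ (x + 2 * Real.pi) = m₀ x)
    (hm₀'m : Measurable m₀') (hm₀'b : ∃ C, ∀ x, ‖m₀' x‖ ≤ C)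
    (hm₀'p : ∀ x, m₀' (x + 2 * Real.pi) = m₀' x)
    -- G = φ̂, G' = φ̂' ∈ L²(ℝ)
    (G G' : ℝ → ℂ)
    (hG : MemLp G 2 (volume : Measure ℝ)) (hG' : MemLp G' 2 (volume : Measure ℝ))
    -- the scaling equations
    (hscal : ∀ᵐ ω ∂(volume : Measure ℝ),
      G ω = ((Real.sqrt N : ℝ) : ℂ)⁻¹ * m₀ (ω / N) * G (ω / N))
    (hscal' : ∀ᵐ ω ∂(volume : Measure ℝ),
      G' ω = ((Real.sqrt N : ℝ) : ℂ)⁻¹ * m₀' (ω / N) * G' (ω / N)) :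
    -- h₀ = Per(conj(φ̂) φ̂') is in L¹(0,2π) and is a fixed point of R_{m₀,m₀'}
    IntegrableOn
      (fun ω => ∑' k : ℤ, conj (G (ω + 2 * Real.pi * k)) * G' (ω + 2 * Real.pi * k))
      (Set.Ioc 0 (2 * Real.pi)) volume ∧
    ∀ᵐ ω ∂(volume : Measure ℝ),
      ruelle N m₀ m₀'
        (fun x => ∑' k : ℤ, conj (G (x + 2 * Real.pi * k)) * G' (x + 2 * Real.pi * k)) ω
      = ∑' k : ℤ, conj (G (ω + 2 * Real.pi * k)) * G' (ω + 2 * Real.pi * k) :=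
  stmt_9_general N hN m₀ m₀' hm₀p hm₀'p G G' hG hG' hscal hscal'
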